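/- In the setting of the marginal function f(x) = max_{y∈Y} φ(x, y), let y^ε: ℝⁿ → ℝᵐ be any single-valued map with y^ε(x) ∈ Y^ε(x) for all x ∈ ℝⁿ and ε > 0, and fix x̄ ∈ ℝⁿ. Then: (a) φ(x, y^ε(x)) → f(x̄) as ε ↓ 0 and x → x̄ jointly; and (b) every limit of ∇ₓφ(x_k, y^{ε_k}(x_k)) along sequences ε_k ↓ 0 and x_k → x̄ belongs to the Clarke subdifferential ∂f(x̄); consequently the map G(x, ε) = {∇ₓφ(x, y) : y ∈ Y^ε(x)} satisfies limsup_{ε↓0, x→x̄} G(x, ε) ⊆ ∂f(x̄). -/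

import Mathlib

open Filter Topology Set
open scoped RealInnerProductSpace NNReal

noncomputable section

variable {E : Type*} [NormedAddCommGroup E] [InnerProductSpace ℝ E]

/-- The Clarke generalized directional derivative of `f` at `x` in direction `d`. -/
def clarkeDeriv (f : E → ℝ) (x d : E) : ℝ :=
  Filter.limsup (fun p : E × ℝ => (f (p.1 + p.2 • d) - f p.1) / p.2)
    ((𝓝 x) ×ˢ (𝓝[>] (0 : ℝ)))

/-- The Clarke subdifferential of `f` at `x`. -/
def clarkeSubdiff (f : E → ℝ) (x : E) : Set E :=
  {v | ∀ d : E, ⟪v, d⟫ ≤ clarkeDeriv f x d}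

/-- Outer limit of `G x ε` along joint sequences `ε_k ↓ 0` and `x_k → x̄`. -/
def SeqJointLimsup (G : E → ℝ → Set E) (xbar : E) : Set E :=
  {u | ∃ (eps : ℕ → ℝ) (xs : ℕ → E) (vs : ℕ → E),
    (∀ k, 0 < eps k) ∧ Tendsto eps atTop (𝓝 0) ∧ Tendsto xs atTop (𝓝 xbar) ∧
    (∀ k, vs k ∈ G (xs k) (eps k)) ∧ Tendsto vs atTop (𝓝 u)}

/-- Outer limit `limsup_{x → xbar} S x` of a set-valued map. -/
def SetMapLimsup (S : E → Set E) (xbar : E) : Set E :=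
  {u | ∃ (xs : ℕ → E) (vs : ℕ → E),
    Tendsto xs atTop (𝓝 xbar) ∧ (∀ k, vs k ∈ S (xs k)) ∧ Tendsto vs atTop (𝓝 u)}

/-- Outer limit of a family of sets `A ε` as `ε ↓ 0`. -/
def FamilyOuterLimit (A : ℝ → Set E) : Set E :=
  {u | ∃ (eps : ℕ → ℝ) (vs : ℕ → E), (∀ k, 0 < eps k) ∧ Tendsto eps atTop (𝓝 0) ∧
    (∀ k, vs k ∈ A (eps k)) ∧ Tendsto vs atTop (𝓝 u)}

/-- Inner limit of a family of sets `A ε` as `ε ↓ 0`. -/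
def FamilyInnerLimit (A : ℝ → Set E) : Set E :=
  {u | ∀ eps : ℕ → ℝ, (∀ k, 0 < eps k) → Tendsto eps atTop (𝓝 0) →
    ∃ vs : ℕ → E, (∀ᶠ k in atTop, vs k ∈ A (eps k)) ∧ Tendsto vs atTop (𝓝 u)}

/-- Painlevé–Kuratowski convergence of the family `A ε` to the set `B` as `ε ↓ 0`. -/
def PKTendsto (A : ℝ → Set E) (B : Set E) : Prop :=
  FamilyOuterLimit A ⊆ B ∧ B ⊆ FamilyInnerLimit A

/-- `g` is the minimal-norm element of `S`. -/
def IsMinNormElt (S : Set E) (g : E) : Prop :=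
  g ∈ S ∧ ∀ v ∈ S, ‖g‖ ≤ ‖v‖

/-- A descent-oriented subdifferential for `f`:  for each fixed `ε > 0` the map
`x ↦ G x ε` is closed-valued and locally bounded, (G1) the joint outer limit as
`ε ↓ 0`, `x → x̄` is contained in the Clarke subdifferential, and (G2) the sets
`limsup_{x → x̄} G x ε` converge in the Painlevé–Kuratowski sense, as `ε ↓ 0`,
to the singleton consisting of the minimal-norm Clarke subgradient. -/
structure IsDescentOrientedSubdiff (f : E → ℝ) (G : E → ℝ → Set E) : Prop where
  closedVals : ∀ ε : ℝ, 0 < ε → ∀ x : E, IsClosed (G x ε)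
  locBounded : ∀ ε : ℝ, 0 < ε → ∀ x : E,
    ∃ δ > (0 : ℝ), ∃ M : ℝ, ∀ y : E, ‖y - x‖ < δ → ∀ v ∈ G y ε, ‖v‖ ≤ M
  outerClarke : ∀ xbar : E, SeqJointLimsup G xbar ⊆ clarkeSubdiff f xbar
  minNormLimit : ∀ xbar : E, ∃ g : E, IsMinNormElt (clarkeSubdiff f xbar) g ∧
    PKTendsto (fun ε => SetMapLimsup (fun x => G x ε) xbar) {g}

variable {F : Type*} [NormedAddCommGroup F] [InnerProductSpace ℝ F]

/-- The marginal function `f(x) = max_{y ∈ Y} φ(x, y)`. -/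
def marginalMax (φ : E → F → ℝ) (Y : Set F) (x : E) : ℝ :=
  sSup ((φ x) '' Y)

/-- The solution set `Y*(x)` of the inner maximization. -/
def maxSol (φ : E → F → ℝ) (Y : Set F) (x : E) : Set F :=
  {y ∈ Y | ∀ y' ∈ Y, φ x y' ≤ φ x y}

/-- The solution set `Y^ε(x)` of the subgradient-regularized inner problem, where
`gx x y` denotes the partial gradient `∇ₓ φ (x, y)`. -/
def regMaxSol (φ : E → F → ℝ) (gx : E → F → E) (Y : Set F) (ε : ℝ) (x : E) : Set F :=
  {y ∈ Y | ∀ y' ∈ Y,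
    φ x y' - ε / 2 * ‖gx x y'‖ ^ 2 ≤ φ x y - ε / 2 * ‖gx x y‖ ^ 2}

/-!
Near `x̄` the partial gradient is bounded by some `K` uniformly on the compact `Y` (tube lemma),
so every `φ(·, y)` and hence `f` is `K`-Lipschitz there, and the penalty costs at most `εK²/2`:
`f x - εK²/2 ≤ φ(x, y^ε(x)) ≤ f x`, which gives (a). For (b), a subsequence of `y^{ε_k}(x_k)`
converges to some `ȳ`; by (a) `ȳ ∈ Y*(x̄)`, the gradients converge to `∇ₓφ(x̄, ȳ)`, and
`φ(·, ȳ)` is a differentiable minorant of `f` touching it at `x̄`, whose gradient is therefore a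
Clarke subgradient.
-/

theorem IsCompact.exists_eventually_forall_norm_le {X Y G : Type*} [TopologicalSpace X]
    [TopologicalSpace Y] [SeminormedAddCommGroup G] {K : Set Y} (hK : IsCompact K)
    {g : X → Y → G} (hg : Continuous fun p : X × Y => g p.1 p.2) (x₀ : X) :
    ∃ C : ℝ≥0, ∀ᶠ x in 𝓝 x₀, ∀ y ∈ K, ‖g x y‖ ≤ C := by
  obtain ⟨C, hC⟩ := hK.exists_bound_of_continuousOn
    (hg.comp (Continuous.prodMk_right x₀)).continuousOn
  refine ⟨C.toNNReal + 1, hK.eventually_forall_of_forall_eventually fun y hy => ?_⟩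
  refine (hg.norm.continuousAt.eventually (gt_mem_nhds ?_)).mono fun _ h => h.le
  calc ‖g x₀ y‖ ≤ C.toNNReal := (hC y hy).trans (Real.le_coe_toNNReal C)
    _ < (C.toNNReal + 1 : ℝ≥0) := by push_cast; linarith

theorem LipschitzOnWith.isBoundedUnder_clarkeQuotient {V : Type*} [SeminormedAddCommGroup V]
    [NormedSpace ℝ V] {f : V → ℝ} {s : Set V} {x : V} {K : ℝ≥0} (hf : LipschitzOnWith K f s)
    (hs : s ∈ 𝓝 x) (d : V) :
    IsBoundedUnder (· ≤ ·) ((𝓝 x) ×ˢ (𝓝[>] (0 : ℝ)))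
      (fun p : V × ℝ => (f (p.1 + p.2 • d) - f p.1) / p.2) := by
  have hray : Tendsto (fun p : V × ℝ => p.1 + p.2 • d) ((𝓝 x) ×ˢ (𝓝[>] (0 : ℝ))) (𝓝 x) := by
    refine ((continuous_fst.add (continuous_snd.smul continuous_const)).tendsto' (x, 0) x
      (by simp)).mono_left ?_
    rw [nhds_prod_eq]
    exact prod_mono le_rfl nhdsWithin_le_nhds
  refine ⟨K * ‖d‖, eventually_map.2 ?_⟩
  filter_upwards [tendsto_fst hs, hray hs, tendsto_snd self_mem_nhdsWithin]
    with p hp hpd (ht : 0 < p.2)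
  rw [div_le_iff₀ ht]
  calc f (p.1 + p.2 • d) - f p.1 ≤ dist (f (p.1 + p.2 • d)) (f p.1) := le_abs_self _
    _ ≤ K * dist (p.1 + p.2 • d) p.1 := hf.dist_le_mul _ hpd _ hp
    _ = K * ‖d‖ * p.2 := by
      rw [dist_self_add_left, norm_smul, Real.norm_of_nonneg ht.le]; ring

theorem mem_clarkeSubdiff_of_hasGradientAt_of_le [CompleteSpace E] {f ψ : E → ℝ} {x v : E}
    {s : Set E} {K : ℝ≥0} (hf : LipschitzOnWith K f s) (hs : s ∈ 𝓝 x)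
    (hψf : ∀ᶠ z in 𝓝 x, ψ z ≤ f z) (hψx : ψ x = f x) (hψ : HasGradientAt ψ v x) :
    v ∈ clarkeSubdiff f x := by
  intro d
  have hslope := (hψ.hasFDerivAt.hasLineDerivAt d).tendsto_slope_zero_right
  simp only [InnerProductSpace.toDual_apply_apply, smul_eq_mul] at hslope
  have hray : Tendsto (fun t : ℝ => x + t • d) (𝓝[>] 0) (𝓝 x) :=
    ((continuous_const.add (continuous_id.smul continuous_const)).tendsto' 0 x
      (by simp)).mono_left nhdsWithin_le_nhds
  refine le_of_forall_sub_le fun δ hδ => le_limsup_of_frequently_le ?_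
    (hf.isBoundedUnder_clarkeQuotient hs d)
  -- with the base point frozen at `x`, the quotients of `f` dominate the slopes of `ψ`
  refine (tendsto_const_nhds.prodMk tendsto_id : Tendsto (fun t : ℝ => (x, t)) _ _).frequently
    (Eventually.frequently ?_)
  filter_upwards [hslope.eventually (eventually_gt_nhds (sub_lt_self _ hδ)), hray hψf,
    self_mem_nhdsWithin] with t hlt hle (ht : 0 < t)
  calc ⟪v, d⟫ - δ ≤ t⁻¹ * (ψ (x + t • d) - ψ x) := hlt.le
    _ ≤ (f (x + t • d) - f x) / t := by
      rw [inv_mul_eq_div, hψx]; gcongr; exact hle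

section Marginal

variable {α β : Type*} {φ : α → β → ℝ} {Y : Set β} {x : α} {y : β}

theorem marginalMax_eq_of_mem_maxSol (hy : y ∈ maxSol φ Y x) : marginalMax φ Y x = φ x y :=
  IsGreatest.csSup_eq ⟨mem_image_of_mem _ hy.1, by rintro _ ⟨y', hy', rfl⟩; exact hy.2 y' hy'⟩

theorem le_marginalMax (hx : (maxSol φ Y x).Nonempty) (hy : y ∈ Y) :
    φ x y ≤ marginalMax φ Y x := by
  obtain ⟨y', hy'⟩ := hx
  exact (marginalMax_eq_of_mem_maxSol hy').symm ▸ hy'.2 y hy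

theorem IsCompact.maxSol_nonempty [TopologicalSpace α] [TopologicalSpace β] (hY : IsCompact Y)
    (hYne : Y.Nonempty) (hφ : Continuous fun p : α × β => φ p.1 p.2) (x : α) :
    (maxSol φ Y x).Nonempty := by
  obtain ⟨y, hy, hmax⟩ :=
    hY.exists_isMaxOn hYne (hφ.comp (Continuous.prodMk_right (Y := β) x)).continuousOn
  exact ⟨y, hy, isMaxOn_iff.1 hmax⟩

theorem lipschitzOnWith_marginalMax [PseudoMetricSpace α] {s : Set α} {K : ℝ≥0}
    (hsol : ∀ x ∈ s, (maxSol φ Y x).Nonempty)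
    (hφ : ∀ y ∈ Y, LipschitzOnWith K (fun x => φ x y) s) :
    LipschitzOnWith K (marginalMax φ Y) s := by
  refine LipschitzOnWith.of_le_add_mul K fun a ha b hb => ?_
  obtain ⟨y, hy⟩ := hsol a ha
  calc marginalMax φ Y a = φ a y := marginalMax_eq_of_mem_maxSol hy
    _ ≤ φ b y + K * dist a b := by
      linarith [le_abs_self (φ a y - φ b y), (hφ y hy.1).dist_le_mul a ha b hb,
        Real.dist_eq (φ a y) (φ b y)]
    _ ≤ marginalMax φ Y b + K * dist a b := by
      gcongr; exact le_marginalMax (hsol b hb) hy.1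

end Marginal

theorem sub_le_of_mem_regMaxSol {V β : Type*} [NormedAddCommGroup V] {φ : V → β → ℝ}
    {gx : V → β → V} {Y : Set β} {ε K : ℝ} {x : V} {y y' : β} (hε : 0 ≤ ε)
    (hy : y ∈ regMaxSol φ gx Y ε x) (hy' : y' ∈ Y) (hK : ‖gx x y'‖ ≤ K) :
    φ x y' - ε / 2 * K ^ 2 ≤ φ x y :=
  calc φ x y' - ε / 2 * K ^ 2 ≤ φ x y' - ε / 2 * ‖gx x y'‖ ^ 2 := by gcongr
    _ ≤ φ x y - ε / 2 * ‖gx x y‖ ^ 2 := hy.2 y' hy'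
    _ ≤ φ x y := sub_le_self _ (by positivity)

section Regularized

variable [CompleteSpace E] {β : Type*} {φ : E → β → ℝ} {gx : E → β → E} {Y : Set β}

theorem exists_lipschitzOnWith_marginalMax [TopologicalSpace β] (hY : IsCompact Y)
    (hYne : Y.Nonempty)
    (hφ : Continuous fun p : E × β => φ p.1 p.2) (hgx : Continuous fun p : E × β => gx p.1 p.2)
    (hgrad : ∀ x, ∀ y ∈ Y, HasGradientAt (fun x' => φ x' y) (gx x y) x) (x₀ : E) :
    ∃ K : ℝ≥0, ∃ s ∈ 𝓝 x₀, (∀ x ∈ s, ∀ y ∈ Y, ‖gx x y‖ ≤ K) ∧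
      LipschitzOnWith K (marginalMax φ Y) s := by
  obtain ⟨K, hK⟩ := hY.exists_eventually_forall_norm_le hgx x₀
  obtain ⟨r, hr, hball⟩ := Metric.eventually_nhds_iff_ball.1 hK
  refine ⟨K, Metric.ball x₀ r, Metric.ball_mem_nhds x₀ hr, hball, ?_⟩
  refine lipschitzOnWith_marginalMax (fun x _ => hY.maxSol_nonempty hYne hφ x)
    fun y hy => (convex_ball x₀ r).lipschitzOnWith_of_nnnorm_hasFDerivWithin_le
      (fun x _ => (hgrad x y hy).hasFDerivAt.hasFDerivWithinAt) (fun x hx => ?_)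
  rw [LinearIsometryEquiv.nnnorm_map, ← NNReal.coe_le_coe, coe_nnnorm]
  exact hball x hx y hy

theorem gradient_mem_clarkeSubdiff_marginalMax {s : Set E} {K : ℝ≥0} {g : E}
    (hsol : ∀ x, (maxSol φ Y x).Nonempty) (hf : LipschitzOnWith K (marginalMax φ Y) s)
    (hs : s ∈ 𝓝 x) (hy : y ∈ maxSol φ Y x) (hg : HasGradientAt (fun x' => φ x' y) g x) :
    g ∈ clarkeSubdiff (marginalMax φ Y) x :=
  mem_clarkeSubdiff_of_hasGradientAt_of_le hf hs
    (Eventually.of_forall fun z => le_marginalMax (hsol z) hy.1)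
    (marginalMax_eq_of_mem_maxSol hy).symm hg

theorem tendsto_apply_of_mem_regMaxSol {ι : Type*} {l : Filter ι} {xs : ι → E} {eps : ι → ℝ}
    {ys : ι → β} {x₀ : E} [TopologicalSpace β] (hY : IsCompact Y) (hYne : Y.Nonempty)
    (hφ : Continuous fun p : E × β => φ p.1 p.2) (hgx : Continuous fun p : E × β => gx p.1 p.2)
    (hgrad : ∀ x, ∀ y ∈ Y, HasGradientAt (fun x' => φ x' y) (gx x y) x)
    (hxs : Tendsto xs l (𝓝 x₀)) (heps : Tendsto eps l (𝓝 0))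
    (hys : ∀ᶠ i in l, 0 ≤ eps i ∧ ys i ∈ regMaxSol φ gx Y (eps i) (xs i)) :
    Tendsto (fun i => φ (xs i) (ys i)) l (𝓝 (marginalMax φ Y x₀)) := by
  have hsol := hY.maxSol_nonempty hYne hφ
  obtain ⟨K, s, hs, hK, hf⟩ := exists_lipschitzOnWith_marginalMax hY hYne hφ hgx hgrad x₀
  have hfx : Tendsto (fun i => marginalMax φ Y (xs i)) l (𝓝 (marginalMax φ Y x₀)) :=
    ((hf.continuousOn.continuousAt hs).tendsto).comp hxs
  have hlow : Tendsto (fun i => marginalMax φ Y (xs i) - eps i / 2 * (K : ℝ) ^ 2) l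
      (𝓝 (marginalMax φ Y x₀)) := by
    simpa using hfx.sub ((heps.div_const 2).mul_const ((K : ℝ) ^ 2))
  refine tendsto_of_tendsto_of_tendsto_of_le_of_le' hlow hfx ?_ ?_
  · filter_upwards [hys, hxs hs] with i ⟨hε, hy⟩ hx
    obtain ⟨y', hy'⟩ := hsol (xs i)
    rw [marginalMax_eq_of_mem_maxSol hy']
    exact sub_le_of_mem_regMaxSol hε hy hy'.1 (hK _ hx _ hy'.1)
  · filter_upwards [hys] with i hy
    exact le_marginalMax (hsol _) hy.2.1

theorem mem_clarkeSubdiff_of_tendsto_gradient_regMaxSol {eps : ℕ → ℝ} {xs : ℕ → E}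
    {ys : ℕ → β} {x₀ v : E} [TopologicalSpace β] [FirstCountableTopology β] (hY : IsCompact Y)
    (hYne : Y.Nonempty)
    (hφ : Continuous fun p : E × β => φ p.1 p.2) (hgx : Continuous fun p : E × β => gx p.1 p.2)
    (hgrad : ∀ x, ∀ y ∈ Y, HasGradientAt (fun x' => φ x' y) (gx x y) x)
    (heps_nonneg : ∀ k, 0 ≤ eps k) (heps : Tendsto eps atTop (𝓝 0))
    (hxs : Tendsto xs atTop (𝓝 x₀)) (hys : ∀ k, ys k ∈ regMaxSol φ gx Y (eps k) (xs k))
    (hv : Tendsto (fun k => gx (xs k) (ys k)) atTop (𝓝 v)) :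
    v ∈ clarkeSubdiff (marginalMax φ Y) x₀ := by
  have hsol := hY.maxSol_nonempty hYne hφ
  obtain ⟨ybar, hybar, σ, hσ, hyσ⟩ := hY.tendsto_subseq fun k => (hys k).1
  have hxσ := hxs.comp hσ.tendsto_atTop
  have hpair : Tendsto (fun j => (xs (σ j), ys (σ j))) atTop (𝓝 (x₀, ybar)) :=
    hxσ.prodMk_nhds hyσ
  have hval : φ x₀ ybar = marginalMax φ Y x₀ :=
    tendsto_nhds_unique ((hφ.tendsto _).comp hpair)
      (tendsto_apply_of_mem_regMaxSol hY hYne hφ hgx hgrad hxσ (heps.comp hσ.tendsto_atTop)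
        (Eventually.of_forall fun j => ⟨heps_nonneg _, hys _⟩))
  have hybarsol : ybar ∈ maxSol φ Y x₀ :=
    ⟨hybar, fun y hy => hval ▸ le_marginalMax (hsol x₀) hy⟩
  have hvybar : v = gx x₀ ybar :=
    tendsto_nhds_unique (hv.comp hσ.tendsto_atTop) ((hgx.tendsto _).comp hpair)
  obtain ⟨K, s, hs, -, hf⟩ := exists_lipschitzOnWith_marginalMax hY hYne hφ hgx hgrad x₀
  exact hvybar ▸ gradient_mem_clarkeSubdiff_marginalMax hsol hf hs hybarsol (hgrad x₀ ybar hybar)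

end Regularized

theorem regularized_selection_limits_general {n m : ℕ}
    (Y : Set (EuclideanSpace ℝ (Fin m)))
    (hYcomp : IsCompact Y)
    (φ : EuclideanSpace ℝ (Fin n) → EuclideanSpace ℝ (Fin m) → ℝ)
    (gx : EuclideanSpace ℝ (Fin n) → EuclideanSpace ℝ (Fin m) → EuclideanSpace ℝ (Fin n))
    (hgrad : ∀ x, ∀ y ∈ Y, HasGradientAt (fun x' => φ x' y) (gx x y) x)
    (hφcont : Continuous fun p : EuclideanSpace ℝ (Fin n) × EuclideanSpace ℝ (Fin m) => φ p.1 p.2)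
    (hgxcont : Continuous fun p : EuclideanSpace ℝ (Fin n) × EuclideanSpace ℝ (Fin m) => gx p.1 p.2)
    (ysel : ℝ → EuclideanSpace ℝ (Fin n) → EuclideanSpace ℝ (Fin m))
    (hysel : ∀ ε > (0 : ℝ), ∀ x, ysel ε x ∈ regMaxSol φ gx Y ε x)
    (xbar : EuclideanSpace ℝ (Fin n)) :
    Tendsto (fun p : EuclideanSpace ℝ (Fin n) × ℝ => φ p.1 (ysel p.2 p.1))
      ((𝓝 xbar) ×ˢ (𝓝[>] (0 : ℝ))) (𝓝 (marginalMax φ Y xbar)) ∧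
    (∀ (eps : ℕ → ℝ) (xs : ℕ → EuclideanSpace ℝ (Fin n)) (v : EuclideanSpace ℝ (Fin n)),
      (∀ k, 0 < eps k) → Tendsto eps atTop (𝓝 0) → Tendsto xs atTop (𝓝 xbar) →
      Tendsto (fun k => gx (xs k) (ysel (eps k) (xs k))) atTop (𝓝 v) →
      v ∈ clarkeSubdiff (marginalMax φ Y) xbar) ∧
    SeqJointLimsup (fun x ε => (fun y => gx x y) '' regMaxSol φ gx Y ε x) xbar ⊆
      clarkeSubdiff (marginalMax φ Y) xbar := by
  have hYne : Y.Nonempty := ⟨_, (hysel 1 one_pos xbar).1⟩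
  refine ⟨?_, ?_, ?_⟩
  · refine tendsto_apply_of_mem_regMaxSol hYcomp hYne hφcont hgxcont hgrad tendsto_fst
      (tendsto_snd.mono_right nhdsWithin_le_nhds) ?_
    filter_upwards [tendsto_snd self_mem_nhdsWithin] with p (hp : 0 < p.2)
    exact ⟨hp.le, hysel _ hp _⟩
  · intro eps xs v hpos heps hxs hv
    exact mem_clarkeSubdiff_of_tendsto_gradient_regMaxSol hYcomp hYne hφcont hgxcont hgrad
      (fun k => (hpos k).le) heps hxs (fun k => hysel _ (hpos k) _) hv
  · rintro u ⟨eps, xs, vs, hpos, heps, hxs, hvs, hu⟩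
    choose ys hys hgys using hvs
    exact mem_clarkeSubdiff_of_tendsto_gradient_regMaxSol hYcomp hYne hφcont hgxcont hgrad
      (fun k => (hpos k).le) heps hxs hys (by simpa only [hgys] using hu)

/-- for any single-valued selection `y^ε(x) ∈ Y^ε(x)` and any `x̄`,
(a) `φ(x, y^ε(x)) → f(x̄)` jointly as `ε ↓ 0`, `x → x̄`; (b) every limit of
`∇ₓφ(x_k, y^{ε_k}(x_k))` along sequences `ε_k ↓ 0`, `x_k → x̄` belongs to the
Clarke subdifferential `∂f(x̄)`; consequently the map
`G(x, ε) = {∇ₓφ(x, y) : y ∈ Y^ε(x)}` satisfies property (G1) at `x̄`. -/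
theorem regularized_selection_limits {n m : ℕ}
    (Y : Set (EuclideanSpace ℝ (Fin m))) (hYne : Y.Nonempty)
    (hYconv : Convex ℝ Y) (hYcomp : IsCompact Y)
    (φ : EuclideanSpace ℝ (Fin n) → EuclideanSpace ℝ (Fin m) → ℝ)
    (gx : EuclideanSpace ℝ (Fin n) → EuclideanSpace ℝ (Fin m) → EuclideanSpace ℝ (Fin n))
    (hgrad : ∀ x, ∀ y ∈ Y, HasGradientAt (fun x' => φ x' y) (gx x y) x)
    (hφcont : Continuous fun p : EuclideanSpace ℝ (Fin n) × EuclideanSpace ℝ (Fin m) => φ p.1 p.2)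
    (hgxcont : Continuous fun p : EuclideanSpace ℝ (Fin n) × EuclideanSpace ℝ (Fin m) => gx p.1 p.2)
    (hconc : ∀ x, ConcaveOn ℝ Y (fun y => φ x y))
    (ysel : ℝ → EuclideanSpace ℝ (Fin n) → EuclideanSpace ℝ (Fin m))
    (hysel : ∀ ε > (0 : ℝ), ∀ x, ysel ε x ∈ regMaxSol φ gx Y ε x)
    (xbar : EuclideanSpace ℝ (Fin n)) :
    Tendsto (fun p : EuclideanSpace ℝ (Fin n) × ℝ => φ p.1 (ysel p.2 p.1))
      ((𝓝 xbar) ×ˢ (𝓝[>] (0 : ℝ))) (𝓝 (marginalMax φ Y xbar)) ∧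
    (∀ (eps : ℕ → ℝ) (xs : ℕ → EuclideanSpace ℝ (Fin n)) (v : EuclideanSpace ℝ (Fin n)),
      (∀ k, 0 < eps k) → Tendsto eps atTop (𝓝 0) → Tendsto xs atTop (𝓝 xbar) →
      Tendsto (fun k => gx (xs k) (ysel (eps k) (xs k))) atTop (𝓝 v) →
      v ∈ clarkeSubdiff (marginalMax φ Y) xbar) ∧
    SeqJointLimsup (fun x ε => (fun y => gx x y) '' regMaxSol φ gx Y ε x) xbar ⊆
      clarkeSubdiff (marginalMax φ Y) xbar :=
  regularized_selection_limits_general Y hYcomp φ gx hgrad hφcont hgxcont ysel hysel xbar
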